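/- arXiv:1708.00510 — 2 statements merged into one kernel-verified Lean document; each statement's English description precedes it below -/
import Mathlib

section
/- Let G=(V,E) be a finite undirected graph with maximum degree at most d, and let r : V → [0,1] assign to each vertex an independent uniformly random value in [0,1]. Then for every vertex v ∈ V, the expected size of the query tree of v satisfies E[|T_v|] ≤ e^d. -/
/-!
Every vertex `u` of the query tree `T_v` is the end of a path `v = u₀, …, u_k = u` along which
the ranks are nondecreasing, and shortcutting the walk we may take the path simple. For a fixed
simple path with `k + 1` distinct vertices the ranks are nondecreasing with probability
`1 / (k + 1)!`: integrating out one coordinate at a time,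
`P(t ≥ r l₀ ≥ ⋯ ≥ r lₙ₋₁) = tⁿ / n!` for `t ∈ [0, 1]`.
As there are at most `dᵏ` walks of length `k` starting at `v`,
`E |T_v| ≤ ∑ₖ dᵏ / (k + 1)! ≤ e^d`.
-/

open MeasureTheory Set
open scoped ENNReal Nat

local notation "𝕀" => Measure.restrict (volume : Measure ℝ) (Icc (0 : ℝ) 1)

instance : IsProbabilityMeasure 𝕀 :=
  ⟨by simp [Real.volume_Icc]⟩

namespace QueryTree

variable {ι : Type*}

theorem measurableSet_isChain_cons_map {R : ℝ → ℝ → Prop}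
    (hR : MeasurableSet {p : ℝ × ℝ | R p.1 p.2}) {f : (ι → ℝ) → ℝ} (hf : Measurable f)
    (l : List ι) : MeasurableSet {r : ι → ℝ | (f r :: l.map r).IsChain R} := by
  induction l generalizing f with
  | nil => simp
  | cons a l ih =>
    simp only [List.map_cons, List.isChain_cons_cons, ofPred_and]
    exact (hR.preimage (hf.prodMk (measurable_pi_apply a))).inter (ih (measurable_pi_apply a))

theorem measurableSet_isChain_map {R : ℝ → ℝ → Prop}
    (hR : MeasurableSet {p : ℝ × ℝ | R p.1 p.2}) (l : List ι) :
    MeasurableSet {r : ι → ℝ | (l.map r).IsChain R} := by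
  cases l with
  | nil => simp
  | cons a l => exact measurableSet_isChain_cons_map hR (measurable_pi_apply a) l

def decreasingBelow (t : ℝ) (l : List ι) : Set (ι → ℝ) :=
  {r | (t :: l.map r).IsChain (· ≥ ·)}

theorem measurableSet_decreasingBelow (t : ℝ) (l : List ι) :
    MeasurableSet (decreasingBelow t l) :=
  measurableSet_isChain_cons_map (R := (· ≥ ·))
    (measurableSet_le measurable_snd measurable_fst) measurable_const l

theorem lintegral_Icc_indicator_Iic_pow_div_factorial {t : ℝ} (ht : t ∈ Icc (0 : ℝ) 1)
    (n : ℕ) :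
    ∫⁻ y in Icc 0 1, (Iic t).indicator (fun y => ENNReal.ofReal (y ^ n / n !)) y
      = ENNReal.ofReal (t ^ (n + 1) / (n + 1)!) := by
  have hIcc : Iic t ∩ Icc 0 1 = Icc 0 t := by
    ext y
    simp only [mem_inter_iff, mem_Iic, mem_Icc]
    exact ⟨fun h => ⟨h.2.1, h.1⟩, fun h => ⟨h.2, h.1, h.2.trans ht.2⟩⟩
  rw [lintegral_indicator measurableSet_Iic, Measure.restrict_restrict measurableSet_Iic, hIcc,
    ← ofReal_integral_eq_lintegral_ofReal]
  · rw [integral_Icc_eq_integral_Ioc, ← intervalIntegral.integral_of_le ht.1,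
      intervalIntegral.integral_div, integral_pow, Nat.factorial_succ]
    push_cast
    rw [zero_pow n.succ_ne_zero, sub_zero, div_div, mul_comm]
  · exact ((continuous_pow n).div_const _).integrableOn_Icc
  · exact (ae_restrict_iff' measurableSet_Icc).mpr (ae_of_all _ fun y hy => by
      have := hy.1; positivity)

theorem ae_le_one [Fintype ι] : ∀ᵐ r ∂Measure.pi (fun _ : ι => 𝕀), ∀ i, r i ≤ 1 :=
  ae_all_iff.mpr fun i => (Measure.tendsto_eval_ae_ae (i := i)).eventually (p := (· ≤ 1))
    ((ae_restrict_mem measurableSet_Icc).mono fun _ hy => hy.2)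

variable [DecidableEq ι]

theorem lmarginal_indicator_decreasingBelow {l : List ι} (hl : l.Nodup) {t : ℝ}
    (ht : t ∈ Icc (0 : ℝ) 1) (x : ι → ℝ) :
    (∫⋯∫⁻_l.toFinset, (decreasingBelow t l).indicator 1 ∂fun _ => 𝕀) x
      = ENNReal.ofReal (t ^ l.length / l.length !) := by
  induction l generalizing t x with
  | nil => simp [decreasingBelow]
  | cons u l ih =>
    obtain ⟨hu, hl⟩ := List.nodup_cons.mp hl
    have hu' : u ∉ l.toFinset := by simpa using hu
    have hmeas (s : ℝ) (l : List ι) :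
        Measurable ((decreasingBelow s l).indicator (1 : (ι → ℝ) → ℝ≥0∞)) :=
      measurable_one.indicator (measurableSet_decreasingBelow s l)
    -- fixing the head coordinate `r u = y` leaves the same event for the tail, below `y`
    have hslice (y : ℝ) :
        (decreasingBelow t (u :: l)).indicator 1 ∘ (Function.update · u y)
          = (Iic t).indicator
              (fun _ => (decreasingBelow y l).indicator (1 : (ι → ℝ) → ℝ≥0∞)) y := by
      ext r
      have hmap : l.map (Function.update r u y) = l.map r :=
        List.map_congr_left fun w hw => Function.update_of_ne (by rintro rfl; exact hu hw) _ _
      by_cases hyt : y ≤ t <;>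
        simp [decreasingBelow, Set.indicator_apply, hmap, hyt, List.isChain_cons_cons]
    rw [List.toFinset_cons, lmarginal_insert _ (hmeas t _) hu', List.length_cons,
      ← lintegral_Icc_indicator_Iic_pow_div_factorial ht]
    refine setLIntegral_congr_fun measurableSet_Icc fun y hy => ?_
    rw [lmarginal_update_of_notMem (hmeas t _) hu', hslice]
    by_cases hyt : y ≤ t
    · simp [hyt, ih hl hy]
    · simp [hyt, lmarginal]

variable [Fintype ι]

theorem measureReal_isChain_le {l : List ι} (hl : l.Nodup) :
    (Measure.pi fun _ : ι => 𝕀).real {r | (l.map r).IsChain (· ≤ ·)} = 1 / l.length ! := by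
  have hrev : {r : ι → ℝ | (l.map r).IsChain (· ≤ ·)}
      =ᵐ[Measure.pi fun _ => 𝕀] decreasingBelow 1 l.reverse := by
    filter_upwards [ae_le_one] with r hr
    change (l.map r).IsChain (· ≤ ·) = (1 :: l.reverse.map r).IsChain (· ≥ ·)
    simp [List.isChain_cons, List.map_reverse, List.isChain_reverse, hr]
  rw [measureReal_def, measure_congr hrev,
    ← lintegral_indicator_one (measurableSet_decreasingBelow _ _),
    lintegral_eq_of_lmarginal_eq l.reverse.toFinset
      (measurable_one.indicator (measurableSet_decreasingBelow _ _)) measurable_const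
      (g := fun _ => ENNReal.ofReal (1 / l.length !))]
  · simp
  · ext x
    rw [lmarginal_indicator_decreasingBelow (List.nodup_reverse.mpr hl) ⟨zero_le_one, le_rfl⟩]
    simp [lmarginal]

end QueryTree

namespace SimpleGraph

open QueryTree

variable {V : Type*} {G : SimpleGraph V}

def Walk.monotoneRanks {v u : V} (p : G.Walk v u) : Set (V → ℝ) :=
  {r | (p.support.map r).IsChain (· ≤ ·)}

theorem Walk.measurableSet_monotoneRanks {v u : V} (p : G.Walk v u) :
    MeasurableSet p.monotoneRanks :=
  measurableSet_isChain_map (measurableSet_le measurable_fst measurable_snd) _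

theorem exists_path_mem_monotoneRanks_of_reflTransGen [DecidableEq V] {r : V → ℝ} {v u : V}
    (h : Relation.ReflTransGen (fun a b => G.Adj a b ∧ r a ≤ r b) v u) :
    ∃ p : G.Path v u, r ∈ (p : G.Walk v u).monotoneRanks := by
  have : ∃ p : G.Walk v u, r ∈ p.monotoneRanks := by
    induction h using Relation.ReflTransGen.head_induction_on with
    | refl => exact ⟨.nil, by simp [Walk.monotoneRanks]⟩
    | head hvc _ ih =>
      obtain ⟨p, hp⟩ := ih
      refine ⟨.cons hvc.1 p, ?_⟩
      rw [Walk.monotoneRanks, mem_ofPred_eq, Walk.support_cons, ← p.cons_tail_support] at *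
      simp only [List.map_cons, List.isChain_cons_cons] at hp ⊢
      exact ⟨hvc.2, hp⟩
  obtain ⟨p, hp⟩ := this
  exact ⟨p.toPath, hp.sublist (p.support_bypass_sublist_support.map r)⟩

variable [Fintype V] [DecidableEq V]

theorem sum_card_finsetWalkLength_le [G.LocallyFinite] {d : ℕ} (hd : ∀ v, G.degree v ≤ d)
    (k : ℕ) (v : V) : ∑ u, (G.finsetWalkLength k v u).card ≤ d ^ k := by
  induction k generalizing v with
  | zero =>
    rw [Finset.sum_eq_single v] <;> simp +contextual [finsetWalkLength, eq_comm]
  | succ k ih =>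
    calc ∑ u, (G.finsetWalkLength (k + 1) v u).card
        ≤ ∑ u, ∑ w : G.neighborSet v, (G.finsetWalkLength k w u).card :=
          Finset.sum_le_sum fun u _ => Finset.card_biUnion_le.trans_eq (by simp)
      _ = ∑ w : G.neighborSet v, ∑ u, (G.finsetWalkLength k w u).card := Finset.sum_comm
      _ ≤ ∑ _w : G.neighborSet v, d ^ k := Finset.sum_le_sum fun w _ => ih w
      _ = G.degree v * d ^ k := by
          rw [Finset.sum_const, Finset.card_univ, card_neighborSet_eq_degree, smul_eq_mul]
      _ ≤ d ^ (k + 1) := by rw [pow_succ']; exact Nat.mul_le_mul_right _ (hd v)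

variable [DecidableRel G.Adj]

theorem sum_path_le_sum_card_finsetWalkLength {f : ℕ → ℝ} (hf : ∀ k, 0 ≤ f k) (v u : V) :
    ∑ p : G.Path v u, f (p : G.Walk v u).length
      ≤ ∑ k ∈ Finset.range (Fintype.card V), (G.finsetWalkLength k v u).card * f k := by
  calc ∑ p : G.Path v u, f (p : G.Walk v u).length
      = ∑ w ∈ (Finset.univ : Finset (G.Path v u)).map (Function.Embedding.subtype _),
          f w.length := by
        rw [Finset.sum_map]; rfl
    _ ≤ ∑ w ∈ G.finsetWalkLengthLT (Fintype.card V) v u, f w.length := by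
        refine Finset.sum_le_sum_of_subset_of_nonneg (fun w hw => ?_) fun _ _ _ => hf _
        obtain ⟨p, -, rfl⟩ := Finset.mem_map.mp hw
        exact mem_finsetWalkLengthLT_iff.mpr p.2.length_lt
    _ = ∑ k ∈ Finset.range (Fintype.card V), (G.finsetWalkLength k v u).card * f k := by
        refine (Finset.sum_disjiUnion _ _ _).trans (Finset.sum_congr rfl fun k _ => ?_)
        rw [Finset.sum_congr rfl fun w hw => by rw [mem_finsetWalkLength_iff.mp hw],
          Finset.sum_const, nsmul_eq_mul]

theorem sum_path_inv_factorial_le_exp {d : ℕ} (hd : ∀ v, G.degree v ≤ d) (v : V) :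
    ∑ u, ∑ p : G.Path v u, (1 / ((p : G.Walk v u).length + 1)! : ℝ) ≤ Real.exp d := by
  calc ∑ u, ∑ p : G.Path v u, (1 / ((p : G.Walk v u).length + 1)! : ℝ)
      ≤ ∑ u, ∑ k ∈ Finset.range (Fintype.card V),
          ((G.finsetWalkLength k v u).card : ℝ) * (1 / (k + 1)!) :=
        Finset.sum_le_sum fun u _ =>
          sum_path_le_sum_card_finsetWalkLength (f := fun k => 1 / ((k + 1)! : ℝ))
            (fun _ => by positivity) v u
    _ = ∑ k ∈ Finset.range (Fintype.card V),
          ((∑ u, (G.finsetWalkLength k v u).card : ℕ) : ℝ) / (k + 1)! := by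
        rw [Finset.sum_comm]
        simp only [Nat.cast_sum, Finset.sum_div, mul_one_div]
    _ ≤ ∑ k ∈ Finset.range (Fintype.card V), (d : ℝ) ^ k / k ! := by
        gcongr with k
        · exact_mod_cast sum_card_finsetWalkLength_le hd k v
        · exact k.le_succ
    _ ≤ Real.exp d := Real.sum_le_exp_of_nonneg d.cast_nonneg _

theorem ncard_reachable_le_sum_indicator (r : V → ℝ) (v : V) :
    ({u | Relation.ReflTransGen (fun a b => G.Adj a b ∧ r a ≤ r b) v u}.ncard : ℝ)
      ≤ ∑ u, ∑ p : G.Path v u, (p : G.Walk v u).monotoneRanks.indicator 1 r := by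
  classical
  rw [ncard_eq_toFinset_card', toFinset_ofPred, Finset.card_filter]
  push_cast
  refine Finset.sum_le_sum fun u _ => ?_
  have hnonneg (p : G.Path v u) :
      0 ≤ (p : G.Walk v u).monotoneRanks.indicator (1 : (V → ℝ) → ℝ) r :=
    indicator_nonneg (fun _ _ => zero_le_one) _
  split_ifs with hu
  · obtain ⟨p, hp⟩ := exists_path_mem_monotoneRanks_of_reflTransGen hu
    refine le_of_eq_of_le ?_ (Finset.single_le_sum (fun p _ => hnonneg p) (Finset.mem_univ p))
    rw [indicator_of_mem hp, Pi.one_apply]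
  · exact Finset.sum_nonneg fun p _ => hnonneg p

theorem integral_ncard_reachable_le (v : V) :
    ∫ r : V → ℝ,
        ({u | Relation.ReflTransGen (fun a b => G.Adj a b ∧ r a ≤ r b) v u}.ncard : ℝ)
        ∂Measure.pi (fun _ => 𝕀)
      ≤ ∑ u, ∑ p : G.Path v u, (1 / ((p : G.Walk v u).length + 1)! : ℝ) := by
  have hint (u : V) (p : G.Path v u) :
      Integrable ((p : G.Walk v u).monotoneRanks.indicator (1 : (V → ℝ) → ℝ))
        (Measure.pi fun _ => 𝕀) :=
    (integrable_const 1).indicator (Walk.measurableSet_monotoneRanks _)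
  calc _ ≤ ∫ r : V → ℝ, ∑ u, ∑ p : G.Path v u,
            (p : G.Walk v u).monotoneRanks.indicator 1 r ∂Measure.pi (fun _ => 𝕀) :=
        integral_mono_of_nonneg (ae_of_all _ fun _ => Nat.cast_nonneg _)
          (integrable_finsetSum _ fun u _ => integrable_finsetSum _ fun p _ => hint u p)
          (ae_of_all _ fun r => ncard_reachable_le_sum_indicator r v)
    _ = ∑ u, ∑ p : G.Path v u, (1 / ((p : G.Walk v u).length + 1)! : ℝ) := by
        rw [integral_finsetSum _ fun u _ => integrable_finsetSum _ fun p _ => hint u p]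
        refine Finset.sum_congr rfl fun u _ => ?_
        rw [integral_finsetSum _ fun p _ => hint u p]
        refine Finset.sum_congr rfl fun p _ => ?_
        rw [integral_indicator_one (Walk.measurableSet_monotoneRanks _), Walk.monotoneRanks,
          measureReal_isChain_le p.2.support_nodup, Walk.length_support]

end SimpleGraph

/-- For a graph `G` with max degree at most `d` and vertex ranks
i.i.d. uniform on `[0,1]`, the expected size of the query tree of any vertex `v`
is at most `e^d`. -/
theorem query_tree_expected_size {V : Type*} [Fintype V]
    (G : SimpleGraph V) [DecidableRel G.Adj] (d : ℕ)
    (hd : ∀ v : V, G.degree v ≤ d) (v : V) :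
    ∫ r : V → ℝ,
        (({u : V | Relation.ReflTransGen (fun a b => G.Adj a b ∧ r a ≤ r b) v u}).ncard : ℝ)
        ∂(Measure.pi (fun _ : V => (volume : Measure ℝ).restrict (Set.Icc 0 1)))
      ≤ Real.exp d := by
  classical
  exact (G.integral_ncard_reachable_le v).trans (G.sum_path_inv_factorial_le_exp hd v)
end

section
/- Let G=(V,E) be a finite undirected graph with maximum degree at most d, let v ∈ V, and let r : V → [0,1] assign to each vertex an independent uniformly random value in [0,1]. Then for every integer k ≥ 0, the expected number of monotone paths of length k starting at v (paths v = u_0, ..., u_k of distinct vertices with r(u_0) ≤ r(u_1) ≤ ... ≤ r(u_k)) is at most d^k/(k+1)!. -/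
/-!
Fix an injective tuple `u` of `n` vertices. With i.i.d. atomless ranks, the values `r ∘ u` are
almost surely distinct, and since relabelling the vertices preserves the law of `r`, each of the
`n!` orderings of `r ∘ u` is strictly increasing with the same probability; these events are
disjoint, so `r ∘ u` is monotone with probability at most `1 / n!`. Summing over the at most
`d ^ k` walks of length `k` from `v` (linearity of expectation) gives the bound.
-/

open MeasureTheory Finset
open scoped ENNReal Nat

theorem measurableSet_setOf_strictMono_comp {β ι : Type*} [Preorder β] [Countable β]
    (u : β → ι) :
    MeasurableSet {r : ι → ℝ | StrictMono (r ∘ u)} := by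
  simp only [StrictMono, Set.ofPred_forall]
  exact .iInter fun i => .iInter fun j => .iInter fun _ =>
    measurableSet_lt (measurable_pi_apply _) (measurable_pi_apply _)

theorem measurableSet_setOf_monotone_comp {β ι : Type*} [Preorder β] [Countable β]
    (u : β → ι) :
    MeasurableSet {r : ι → ℝ | Monotone (r ∘ u)} := by
  simp only [Monotone, Set.ofPred_forall]
  exact .iInter fun i => .iInter fun j => .iInter fun _ =>
    measurableSet_le (measurable_pi_apply _) (measurable_pi_apply _)

theorem Equiv.Perm.eq_of_strictMono_comp {α : Type*} [PartialOrder α] {n : ℕ} {f : Fin n → α}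
    {σ τ : Equiv.Perm (Fin n)} (hσ : StrictMono (f ∘ σ)) (hτ : StrictMono (f ∘ τ)) :
    σ = τ := by
  have hf : Function.Injective f := by
    simpa [Function.comp_def] using hσ.injective.comp σ.symm.injective
  exact Equiv.ext fun i => hf (congrFun (Tuple.unique_monotone hσ.monotone hτ.monotone) i)

section AtomlessRanks

variable {ι : Type*} [Fintype ι] (ν : Measure ℝ) [SigmaFinite ν]

theorem measurePreserving_comp_perm (g : Equiv.Perm ι) :
    MeasurePreserving (fun r : ι → ℝ => r ∘ g) (Measure.pi fun _ => ν)
      (Measure.pi fun _ => ν) := by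
  convert measurePreserving_arrowCongr' (fun _ => ν) (fun _ => ν) g.symm (.refl ℝ)
    fun _ => .id ν using 1
  funext r i
  rfl

theorem ae_apply_ne_apply [NullSingletonClass ν] {a b : ι} (hab : a ≠ b) :
    ∀ᵐ r ∂Measure.pi (fun _ : ι => ν), r a ≠ r b := by
  classical
  -- Fubini over the splitting `ι = {a} ⊔ {i | i ≠ a}`: each slice is a hyperplane `r b = c`.
  let p : ι → Prop := (· = a)
  have hb : ¬ p b := hab.symm
  let T : Set ((({i // p i} → ℝ) × ({i // ¬ p i} → ℝ))) :=
    {z | z.2 ⟨b, hb⟩ = z.1 ⟨a, rfl⟩}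
  have hT : MeasurableSet T :=
    measurableSet_eq_fun ((measurable_pi_apply _).comp measurable_snd)
      ((measurable_pi_apply _).comp measurable_fst)
  have hpre :
      {r : ι → ℝ | ¬ r a ≠ r b} = MeasurableEquiv.piEquivPiSubtypeProd _ p ⁻¹' T := by
    ext r; exact not_not.trans eq_comm
  rw [ae_iff, hpre, (measurePreserving_piEquivPiSubtypeProd (fun _ => ν) p).measure_preimage
    hT.nullMeasurableSet, Measure.prod_apply hT]
  refine (lintegral_congr fun x : {i // p i} → ℝ => ?_).trans lintegral_zero
  convert Measure.pi_hyperplane (fun _ => ν) (⟨b, hb⟩ : {i // ¬ p i}) (x ⟨a, rfl⟩)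
  rfl

theorem ae_injective [NullSingletonClass ν] :
    ∀ᵐ r ∂Measure.pi (fun _ : ι => ν), Function.Injective r := by
  simp only [Function.Injective, ae_all_iff]
  intro a b
  rcases eq_or_ne a b with rfl | hab
  · exact .of_forall fun _ _ => rfl
  · filter_upwards [ae_apply_ne_apply ν hab] with r hr h using absurd h hr

theorem measure_setOf_strictMono_comp_perm {n : ℕ} (u : Fin n ↪ ι)
    (σ : Equiv.Perm (Fin n)) :
    Measure.pi (fun _ => ν) {r : ι → ℝ | StrictMono (r ∘ u ∘ σ)} =
      Measure.pi (fun _ => ν) {r : ι → ℝ | StrictMono (r ∘ u)} := by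
  -- `σ.viaEmbedding u` permutes `ι`, acting as `u ∘ σ ∘ u⁻¹` on the range of `u`.
  have hpre : {r : ι → ℝ | StrictMono (r ∘ u ∘ σ)} =
      (fun r : ι → ℝ => r ∘ σ.viaEmbedding u) ⁻¹' {r | StrictMono (r ∘ u)} := by
    ext r
    simp only [Set.mem_ofPred_eq, Set.mem_preimage, Function.comp_def,
      Equiv.Perm.viaEmbedding_apply]
  rw [hpre, (measurePreserving_comp_perm ν _).measure_preimage
    (measurableSet_setOf_strictMono_comp u).nullMeasurableSet]

end AtomlessRanks

section RandomRanks

variable {ι : Type*} [Fintype ι] (ν : Measure ℝ) [IsProbabilityMeasure ν]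

theorem factorial_mul_measure_setOf_strictMono_comp_le_one {n : ℕ} (u : Fin n ↪ ι) :
    n ! * Measure.pi (fun _ => ν) {r : ι → ℝ | StrictMono (r ∘ u)} ≤ 1 := by
  have hdisj : Set.PairwiseDisjoint (univ : Finset (Equiv.Perm (Fin n)))
      fun σ : Equiv.Perm (Fin n) => {r : ι → ℝ | StrictMono (r ∘ u ∘ σ)} :=
    fun σ _ τ _ hστ => Set.disjoint_left.2 fun r hσ hτ =>
      hστ (Equiv.Perm.eq_of_strictMono_comp (f := r ∘ u) hσ hτ)
  calc (n ! : ℝ≥0∞) * Measure.pi (fun _ => ν) {r : ι → ℝ | StrictMono (r ∘ u)}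
      = ∑ σ : Equiv.Perm (Fin n),
          Measure.pi (fun _ => ν) {r : ι → ℝ | StrictMono (r ∘ u ∘ σ)} := by
        simp [measure_setOf_strictMono_comp_perm, Fintype.card_perm]
    _ = Measure.pi (fun _ => ν) (⋃ σ ∈ (univ : Finset (Equiv.Perm (Fin n))),
          {r : ι → ℝ | StrictMono (r ∘ u ∘ σ)}) :=
        (measure_biUnion_finset hdisj fun σ _ =>
          measurableSet_setOf_strictMono_comp (u ∘ σ)).symm
    _ ≤ 1 := prob_le_one

theorem measure_setOf_monotone_comp_le [NullSingletonClass ν] {n : ℕ} (u : Fin n ↪ ι) :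
    Measure.pi (fun _ => ν) {r : ι → ℝ | Monotone (r ∘ u)} ≤ (n ! : ℝ≥0∞)⁻¹ := by
  have hae : {r : ι → ℝ | Monotone (r ∘ u)} ≤ᵐ[Measure.pi fun _ => ν]
      {r : ι → ℝ | StrictMono (r ∘ u)} := by
    filter_upwards [ae_injective ν] with r hr hmono using hmono.strictMono_of_injective
      (hr.comp u.injective)
  refine (measure_mono_ae hae).trans (ENNReal.le_inv_iff_mul_le.2 ?_)
  rw [mul_comm]
  exact factorial_mul_measure_setOf_strictMono_comp_le_one ν u

theorem measureReal_setOf_monotone_comp_le [NullSingletonClass ν] {n : ℕ} (u : Fin n ↪ ι) :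
    (Measure.pi fun _ => ν).real {r : ι → ℝ | Monotone (r ∘ u)} ≤ (n ! : ℝ)⁻¹ := by
  simpa [measureReal_def] using
    ENNReal.toReal_mono (by simp [Nat.factorial_ne_zero]) (measure_setOf_monotone_comp_le ν u)

theorem integral_card_filter_monotone_comp_le [NullSingletonClass ν] {n : ℕ}
    (P : Finset (Fin n → ι)) (hP : ∀ u ∈ P, Function.Injective u) :
    ∫ r, (#{u ∈ P | Monotone (r ∘ u)} : ℝ) ∂Measure.pi (fun _ => ν) ≤ #P / n ! := by
  classical
  have hind (r : ι → ℝ) : (#{u ∈ P | Monotone (r ∘ u)} : ℝ) =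
      ∑ u ∈ P, {r : ι → ℝ | Monotone (r ∘ u)}.indicator 1 r := by
    simp [Set.indicator_apply]
  calc ∫ r, (#{u ∈ P | Monotone (r ∘ u)} : ℝ) ∂Measure.pi (fun _ => ν)
      = ∑ u ∈ P, (Measure.pi fun _ => ν).real {r : ι → ℝ | Monotone (r ∘ u)} := by
        simp_rw [hind]
        rw [integral_finsetSum _ fun u _ =>
          (integrable_const 1).indicator (measurableSet_setOf_monotone_comp u)]
        exact sum_congr rfl fun u _ =>
          integral_indicator_one (measurableSet_setOf_monotone_comp u)
    _ ≤ ∑ _u ∈ P, (n ! : ℝ)⁻¹ :=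
        sum_le_sum fun u hu => measureReal_setOf_monotone_comp_le ν ⟨u, hP u hu⟩
    _ = #P / n ! := by rw [sum_const, nsmul_eq_mul, div_eq_mul_inv]

end RandomRanks

namespace SimpleGraph

variable {V : Type*} [Fintype V] [DecidableEq V] (G : SimpleGraph V) [DecidableRel G.Adj]

def walkTuplesFrom (v : V) (k : ℕ) : Finset (Fin (k + 1) → V) :=
  {u | u 0 = v ∧ ∀ j : Fin k, G.Adj (u j.castSucc) (u j.succ)}

theorem walkTuplesFrom_succ_subset (v : V) (k : ℕ) :
    G.walkTuplesFrom v (k + 1) ⊆ (G.walkTuplesFrom v k).biUnion fun u =>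
      (G.neighborFinset (u (Fin.last k))).image (Fin.snoc u) := by
  intro u hu
  simp only [walkTuplesFrom, mem_filter, mem_univ, true_and] at hu
  simp only [mem_biUnion, mem_image, walkTuplesFrom, mem_filter, mem_univ, true_and,
    mem_neighborFinset]
  refine ⟨Fin.init u, ⟨hu.1, fun j => hu.2 j.castSucc⟩, u (Fin.last _), hu.2 (Fin.last k),
    Fin.snoc_init_self u⟩

theorem card_walkTuplesFrom_le {d : ℕ} (hd : ∀ w, G.degree w ≤ d) (v : V) (k : ℕ) :
    #(G.walkTuplesFrom v k) ≤ d ^ k := by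
  induction k with
  | zero =>
    refine card_le_one.2 fun a ha b hb => funext fun i => ?_
    simp only [walkTuplesFrom, mem_filter] at ha hb
    rw [Fin.fin_one_eq_zero i, ha.2.1, hb.2.1]
  | succ k ih =>
    calc #(G.walkTuplesFrom v (k + 1))
        ≤ #(G.walkTuplesFrom v k) * d :=
          (card_le_card (G.walkTuplesFrom_succ_subset v k)).trans <|
            card_biUnion_le_card_mul _ _ _ fun u _ => card_image_le.trans (hd _)
      _ ≤ d ^ (k + 1) := by rw [pow_succ]; exact Nat.mul_le_mul_right d ih

end SimpleGraph

/-- In a graph with maximum degree at most `d`, with vertex ranks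
i.i.d. uniform on `[0,1]`, the expected number of monotone paths of length `k`
starting at a vertex `v` is at most `d^k / (k+1)!`. -/
theorem expected_monotone_paths {V : Type*} [Fintype V] (G : SimpleGraph V)
    [DecidableRel G.Adj] (d : ℕ) (hd : ∀ v : V, G.degree v ≤ d) (v : V) (k : ℕ) :
    ∫ r : V → ℝ,
        (({u : Fin (k + 1) → V | Function.Injective u ∧ u 0 = v ∧
            (∀ j : Fin k, G.Adj (u j.castSucc) (u j.succ)) ∧
            (∀ j : Fin k, r (u j.castSucc) ≤ r (u j.succ))}).ncard : ℝ)
        ∂(Measure.pi (fun _ : V => (volume : Measure ℝ).restrict (Set.Icc 0 1)))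
      ≤ (d : ℝ) ^ k / (Nat.factorial (k + 1) : ℝ) := by
  classical
  have : IsProbabilityMeasure ((volume : Measure ℝ).restrict (Set.Icc 0 1)) :=
    ⟨by simp [Real.volume_Icc]⟩
  set paths := {u ∈ G.walkTuplesFrom v k | Function.Injective u}
  have hpaths (r : V → ℝ) : {u : Fin (k + 1) → V | Function.Injective u ∧ u 0 = v ∧
      (∀ j : Fin k, G.Adj (u j.castSucc) (u j.succ)) ∧
      (∀ j : Fin k, r (u j.castSucc) ≤ r (u j.succ))} =
        ↑{u ∈ paths | Monotone (r ∘ u)} := by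
    ext u
    simp only [Set.mem_ofPred_eq, Fin.monotone_iff_le_succ, Function.comp_apply,
      SimpleGraph.walkTuplesFrom, coe_filter, mem_filter, mem_univ, true_and, paths]
    tauto
  simp_rw [hpaths, Set.ncard_coe_finset]
  calc _ ≤ (#paths : ℝ) / (k + 1)! :=
        integral_card_filter_monotone_comp_le _ paths fun u hu => (mem_filter.1 hu).2
    _ ≤ (d : ℝ) ^ k / (k + 1)! := by
        gcongr
        exact_mod_cast (card_filter_le _ _).trans (G.card_walkTuplesFrom_le hd v k)
end
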